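/- Assume B is invertible. Let (θ₁, s₁, w₁) and (θ₂, s₂, w₂) satisfy the harmonic pencil equations with θ₁ ≠ 0, θ₂ ≠ 0, s₁ ≠ 0, s₂ ≠ 0 and θ₁² ≠ θ₂². Then s₁ᵀ B w₂ = 0 and w₁ᵀ Bᵀ s₂ = 0. -/

import Mathlib

open Matrix

noncomputable def enorm {ι : Type*} [Fintype ι] (v : ι → ℝ) : ℝ :=
  Real.sqrt (∑ i, v i ^ 2)

def eLast (m : ℕ) : Fin m → ℝ := fun i => if (i : ℕ) = m - 1 then 1 else 0

def HarmonicPencil {m : ℕ} (B : Matrix (Fin m) (Fin m) ℝ) (β θ : ℝ)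
    (s w : Fin m → ℝ) : Prop :=
  θ • B.mulVec w = (B * Bᵀ + β ^ 2 • vecMulVec (eLast m) (eLast m)).mulVec s ∧
  θ • Bᵀ.mulVec s = (Bᵀ * B).mulVec w

noncomputable def specNorm {m n : Type*} [Fintype m] [Fintype n] [DecidableEq n]
    (A : Matrix m n ℝ) : ℝ :=
  ‖LinearMap.toContinuousLinearMap (Matrix.toEuclideanLin A)‖

noncomputable def sep {n : Type*} [Fintype n] [DecidableEq n] (a : ℝ) (G : Matrix n n ℝ) : ℝ :=
  sInf {r | ∃ x : n → ℝ, _root_.enorm x = 1 ∧ r = _root_.enorm ((a • (1 : Matrix n n ℝ) - G).mulVec x)}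

noncomputable def sigmaMin {m n : Type*} [Fintype m] [Fintype n] (C : Matrix m n ℝ) : ℝ :=
  sSup {c | 0 ≤ c ∧ ∀ h, c * _root_.enorm h ≤ _root_.enorm (C.mulVec h)}

noncomputable def sinAngleVec {ι : Type*} [Fintype ι] (x y : ι → ℝ) : ℝ :=
  Real.sqrt (1 - (x ⬝ᵥ y) ^ 2 / (_root_.enorm x ^ 2 * _root_.enorm y ^ 2))

noncomputable def toE {ι : Type*} (v : ι → ℝ) : EuclideanSpace ℝ ι :=
  (WithLp.equiv 2 (ι → ℝ)).symm v

noncomputable def ofE {ι : Type*} (v : EuclideanSpace ℝ ι) : ι → ℝ :=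
  WithLp.equiv 2 (ι → ℝ) v

noncomputable def sinAngleSub {ι : Type*} [Fintype ι] (x : EuclideanSpace ℝ ι)
    (E : Submodule ℝ (EuclideanSpace ℝ ι)) : ℝ :=
  ‖x - (E.orthogonalProjection x : EuclideanSpace ℝ ι)‖ / ‖x‖

def Atilde {M N : ℕ} (A : Matrix (Fin M) (Fin N) ℝ) :
    Matrix (Fin M ⊕ Fin N) (Fin M ⊕ Fin N) ℝ :=
  fromBlocks 0 A Aᵀ 0

def Btilde {m : ℕ} (B : Matrix (Fin m) (Fin m) ℝ) :
    Matrix (Fin m ⊕ Fin m) (Fin m ⊕ Fin m) ℝ :=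
  fromBlocks 0 B Bᵀ 0

noncomputable def Ctilde {m : ℕ} (B : Matrix (Fin m) (Fin m) ℝ) (β : ℝ) :
    Matrix (Fin m ⊕ Fin m) (Fin m ⊕ Fin m) ℝ :=
  fromBlocks (B * Bᵀ + β ^ 2 • vecMulVec (eLast m) (eLast m)) 0 0 (Bᵀ * B)

noncomputable def colSpanE {M N m : ℕ} (P : Matrix (Fin M) (Fin m) ℝ)
    (Q : Matrix (Fin N) (Fin m) ℝ) : Submodule ℝ (EuclideanSpace ℝ (Fin M ⊕ Fin N)) :=
  Submodule.span ℝ {z | ∃ x y : Fin m → ℝ, z = toE (Sum.elim (P.mulVec x) (Q.mulVec y))}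

noncomputable def Mrho {m : ℕ} (B : Matrix (Fin m) (Fin m) ℝ) (β ρ : ℝ) :
    Matrix ((Fin m ⊕ Fin m) ⊕ Unit) (Fin m ⊕ Fin m) ℝ :=
  Matrix.fromRows
    (fromBlocks (-(ρ • (1 : Matrix (Fin m) (Fin m) ℝ))) B Bᵀ (-(ρ • 1)))
    (Matrix.of fun (_ : Unit) j => Sum.elim (β • eLast m) (0 : Fin m → ℝ) j)

/-!
Pairing the first pencil equation of one triple with `s` of the other, and the second with `w`,
the symmetry of `C₁` and `C₂` gives `θ₂ a = θ₁ b` and `θ₂ b = θ₁ a` for the two cross products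
`a = s₁ᵀ B w₂`, `b = s₂ᵀ B w₁`. Hence `θ₂² a = θ₁² a` and `θ₂² b = θ₁² b`, so both vanish.
-/

lemma Matrix.IsSymm.dotProduct_mulVec_comm {n : Type*} [Fintype n] {C : Matrix n n ℝ}
    (hC : C.IsSymm) (x y : n → ℝ) : x ⬝ᵥ C *ᵥ y = y ⬝ᵥ C *ᵥ x := by
  rw [← dotProduct_transpose_mulVec, hC.eq]

section SymmetricPencil

variable {m n : Type*} [Fintype m] [Fintype n]
  {B : Matrix m n ℝ} {C₁ : Matrix m m ℝ} {C₂ : Matrix n n ℝ}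
  {θ₁ θ₂ : ℝ} {s₁ s₂ : m → ℝ} {w₁ w₂ : n → ℝ}

lemma mul_dotProduct_mulVec_eq_of_pencil_left (hC₁ : C₁.IsSymm)
    (h₁ : θ₁ • B *ᵥ w₁ = C₁ *ᵥ s₁) (h₂ : θ₂ • B *ᵥ w₂ = C₁ *ᵥ s₂) :
    θ₂ * (s₁ ⬝ᵥ B *ᵥ w₂) = θ₁ * (s₂ ⬝ᵥ B *ᵥ w₁) := by
  rw [← smul_eq_mul, ← dotProduct_smul, h₂, hC₁.dotProduct_mulVec_comm, ← h₁, dotProduct_smul,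
    smul_eq_mul]

lemma mul_dotProduct_mulVec_eq_of_pencil_right (hC₂ : C₂.IsSymm)
    (h₁ : θ₁ • Bᵀ *ᵥ s₁ = C₂ *ᵥ w₁) (h₂ : θ₂ • Bᵀ *ᵥ s₂ = C₂ *ᵥ w₂) :
    θ₂ * (s₂ ⬝ᵥ B *ᵥ w₁) = θ₁ * (s₁ ⬝ᵥ B *ᵥ w₂) := by
  rw [← dotProduct_transpose_mulVec, ← smul_eq_mul, ← dotProduct_smul, h₂,
    hC₂.dotProduct_mulVec_comm, ← h₁, dotProduct_smul, smul_eq_mul, dotProduct_transpose_mulVec]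

theorem dotProduct_mulVec_eq_zero_of_pencil (hC₁ : C₁.IsSymm) (hC₂ : C₂.IsSymm)
    (h₁B : θ₁ • B *ᵥ w₁ = C₁ *ᵥ s₁) (h₁Bt : θ₁ • Bᵀ *ᵥ s₁ = C₂ *ᵥ w₁)
    (h₂B : θ₂ • B *ᵥ w₂ = C₁ *ᵥ s₂) (h₂Bt : θ₂ • Bᵀ *ᵥ s₂ = C₂ *ᵥ w₂)
    (hθ : θ₁ ^ 2 ≠ θ₂ ^ 2) :
    s₁ ⬝ᵥ B *ᵥ w₂ = 0 ∧ s₂ ⬝ᵥ B *ᵥ w₁ = 0 := by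
  have hl := mul_dotProduct_mulVec_eq_of_pencil_left hC₁ h₁B h₂B
  have hr := mul_dotProduct_mulVec_eq_of_pencil_right hC₂ h₁Bt h₂Bt
  have hθ' : θ₁ ^ 2 - θ₂ ^ 2 ≠ 0 := sub_ne_zero.mpr hθ
  constructor
  · refine (mul_eq_zero.mp ?_).resolve_left hθ'
    linear_combination -θ₁ * hr - θ₂ * hl
  · refine (mul_eq_zero.mp ?_).resolve_left hθ'
    linear_combination -θ₁ * hl - θ₂ * hr

end SymmetricPencil

lemma isSymm_mul_transpose_add_sq_smul_vecMulVec {m : Type*} [Fintype m]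
    (B : Matrix m m ℝ) (β : ℝ) (e : m → ℝ) :
    (B * Bᵀ + β ^ 2 • vecMulVec e e).IsSymm :=
  (isSymm_mul_transpose_self B).add (IsSymm.smul (transpose_vecMulVec e e) _)

theorem stmt1_general (m : ℕ) (B : Matrix (Fin m) (Fin m) ℝ)
    (β θ₁ θ₂ : ℝ) (s₁ w₁ s₂ w₂ : Fin m → ℝ)
    (h1 : HarmonicPencil B β θ₁ s₁ w₁) (h2 : HarmonicPencil B β θ₂ s₂ w₂)
    (hθ : θ₁ ^ 2 ≠ θ₂ ^ 2) :
    s₁ ⬝ᵥ B.mulVec w₂ = 0 ∧ w₁ ⬝ᵥ Bᵀ.mulVec s₂ = 0 := by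
  obtain ⟨h1B, h1Bt⟩ := h1
  obtain ⟨h2B, h2Bt⟩ := h2
  obtain ⟨h12, h21⟩ := dotProduct_mulVec_eq_zero_of_pencil
    (isSymm_mul_transpose_add_sq_smul_vecMulVec B β (eLast m)) (isSymm_transpose_mul_self B)
    h1B h1Bt h2B h2Bt hθ
  exact ⟨h12, by rw [dotProduct_transpose_mulVec, h21]⟩

theorem stmt1 (m : ℕ) (hm : 0 < m) (B : Matrix (Fin m) (Fin m) ℝ) (hB : IsUnit B)
    (β θ₁ θ₂ : ℝ) (s₁ w₁ s₂ w₂ : Fin m → ℝ)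
    (h1 : HarmonicPencil B β θ₁ s₁ w₁) (h2 : HarmonicPencil B β θ₂ s₂ w₂)
    (hθ1 : θ₁ ≠ 0) (hθ2 : θ₂ ≠ 0) (hs1 : s₁ ≠ 0) (hs2 : s₂ ≠ 0)
    (hθ : θ₁ ^ 2 ≠ θ₂ ^ 2) :
    s₁ ⬝ᵥ B.mulVec w₂ = 0 ∧ w₁ ⬝ᵥ Bᵀ.mulVec s₂ = 0 :=
  stmt1_general m B β θ₁ θ₂ s₁ w₁ s₂ w₂ h1 h2 hθ
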